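/- For every propositional formula φ, φ is a classical tautology if and only if φ is CL-valid (Proponent has a CL-winning strategy for φ), where CL is the ruleset E with rules D11 and D12 removed. -/

import Mathlib

/- Formalization of Lorenzen dialogue games, following Felscher's presentation.

   Propositional formulas are built from atoms using ¬, ∧, ∨, →.  A dialogue
   for a formula φ is a sequence of moves beginning with Proponent (P)
   asserting φ at position 0, with O moving at odd positions and P at even
   positions.  Each later move attacks or defends an earlier move of the other
   player, according to the particle rules.  Structural rules (D10, D11, D12,
   D13, E, and the variants D10*, D10′) constrain dialogues further.  P wins
   if P made the last move and no moves are available to O; φ is S-valid if P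
   has an S-winning strategy for φ. -/

namespace LorenzenDialogues

/-- Propositional formulas: atoms, ¬, ∧, ∨, →. -/
inductive Formula : Type
  | atom : ℕ → Formula
  | neg  : Formula → Formula
  | and  : Formula → Formula → Formula
  | or   : Formula → Formula → Formula
  | imp  : Formula → Formula → Formula
deriving DecidableEq

/-- Statements: formulas together with the symbolic attacks `?`, `∧_L`, `∧_R`. -/
inductive Statement : Type
  | form  : Formula → Statement
  | qmark : Statement
  | andL  : Statement
  | andR  : Statement
deriving DecidableEq

/-- Particle rules, attack part: which statements attack which formulas. -/
inductive Attacks : Statement → Formula → Prop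
  | andL (a b : Formula) : Attacks .andL (.and a b)
  | andR (a b : Formula) : Attacks .andR (.and a b)
  | qmark (a b : Formula) : Attacks .qmark (.or a b)
  | imp (a b : Formula) : Attacks (.form a) (.imp a b)
  | neg (a : Formula) : Attacks (.form a) (.neg a)

/-- Particle rules, defense part: `Defends χ a s` means `s` is a permitted
    defense of the formula `χ` against the attack `a`.  (A negation admits
    no defense.) -/
inductive Defends : Formula → Statement → Statement → Prop
  | andL (a b : Formula) : Defends (.and a b) .andL (.form a)
  | andR (a b : Formula) : Defends (.and a b) .andR (.form b)
  | orL (a b : Formula) : Defends (.or a b) .qmark (.form a)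
  | orR (a b : Formula) : Defends (.or a b) .qmark (.form b)
  | imp (a b : Formula) : Defends (.imp a b) (.form a) (.form b)

/-- A move: a statement, a flag recording whether it is an attack (`true`)
    or a defense (`false`), and the position of the earlier move it attacks,
    resp. the earlier attack it defends against. -/
structure Move : Type where
  statement : Statement
  isAttack : Bool
  ref : ℕ
deriving DecidableEq

/-- A dialogue: the initial formula asserted by P at position 0, followed by
    the list of later moves (the move at list index `i` occupies position
    `i + 1`; O moves at odd positions, P at even positions). -/
structure Dialogue : Type where
  initial : Formula
  moves : List Move

/-- The statement asserted at position `n` (if any). -/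
def Dialogue.stmtAt (d : Dialogue) (n : ℕ) : Option Statement :=
  if n = 0 then some (.form d.initial) else (d.moves[n - 1]?).map Move.statement

/-- The move at position `n ≥ 1` (if any); position 0 is the initial assertion,
    not a move. -/
def Dialogue.moveAt (d : Dialogue) (n : ℕ) : Option Move :=
  if n = 0 then none else d.moves[n - 1]?

/-- The move `m`, played at position `n ≥ 1`, is permitted by the particle
    rules: it refers to an earlier position of the other player; if it is an
    attack, it attacks a formula asserted there, and if it is a defense, it
    responds to an attack played there, as the particle rules prescribe. -/
def MoveOK (d : Dialogue) (n : ℕ) (m : Move) : Prop :=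
  m.ref < n ∧ m.ref % 2 ≠ n % 2 ∧
    (m.isAttack = true →
      ∃ ψ, d.stmtAt m.ref = some (.form ψ) ∧ Attacks m.statement ψ) ∧
    (m.isAttack = false →
      ∃ a χ, d.moveAt m.ref = some a ∧ a.isAttack = true ∧
        d.stmtAt a.ref = some (.form χ) ∧ Defends χ a.statement m.statement)

/-- The dialogue adheres to the particle rules (every move is legal). -/
def ParticleOK (d : Dialogue) : Prop :=
  ∀ i m, d.moves[i]? = some m → MoveOK d (i + 1) m

/-- Position `n` carries a defense of the attack made at position `r`. -/
def IsDefenseOf (d : Dialogue) (n r : ℕ) : Prop :=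
  ∃ m, d.moveAt n = some m ∧ m.isAttack = false ∧ m.ref = r

/-- Position `n` carries an attack on the assertion made at position `r`. -/
def IsAttackOn (d : Dialogue) (n r : ℕ) : Prop :=
  ∃ m, d.moveAt n = some m ∧ m.isAttack = true ∧ m.ref = r

/-- Position `n` carries an attack. -/
def IsAttackPos (d : Dialogue) (n : ℕ) : Prop :=
  ∃ m, d.moveAt n = some m ∧ m.isAttack = true

/-- The attack at position `r` is still open (no defense against it has yet
    been played) before position `k`. -/
def OpenAt (d : Dialogue) (r k : ℕ) : Prop :=
  IsAttackPos d r ∧ ¬ ∃ j, j < k ∧ IsDefenseOf d j r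

/-- (D10) P may assert an atomic formula only after it has been asserted by O
    before. -/
def D10 (d : Dialogue) : Prop :=
  ∀ n p, n % 2 = 0 → d.stmtAt n = some (.form (.atom p)) →
    ∃ j, j < n ∧ j % 2 = 1 ∧ d.stmtAt j = some (.form (.atom p))

/-- (D10*) P may assert an atom `p` only if O has asserted `p` or `¬p`
    before. -/
def D10star (d : Dialogue) : Prop :=
  ∀ n p, n % 2 = 0 → d.stmtAt n = some (.form (.atom p)) →
    ∃ j, j < n ∧ j % 2 = 1 ∧
      (d.stmtAt j = some (.form (.atom p)) ∨
        d.stmtAt j = some (.form (.neg (.atom p))))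

/-- (D10′) P may assert an atom `p` only if O has asserted `p` or `¬¬p`
    before. -/
def D10prime (d : Dialogue) : Prop :=
  ∀ n p, n % 2 = 0 → d.stmtAt n = some (.form (.atom p)) →
    ∃ j, j < n ∧ j % 2 = 1 ∧
      (d.stmtAt j = some (.form (.atom p)) ∨
        d.stmtAt j = some (.form (.neg (.neg (.atom p)))))

/-- (D11) When defending, only the most recent open attack may be responded
    to: the attack defended against is open, and no strictly more recent open
    attack (against the same player) exists. -/
def D11 (d : Dialogue) : Prop :=
  ∀ n r, IsDefenseOf d n r →
    OpenAt d r n ∧ ¬ ∃ r', r < r' ∧ r' < n ∧ r' % 2 = r % 2 ∧ OpenAt d r' n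

/-- (D12) An attack may be answered at most once. -/
def D12 (d : Dialogue) : Prop :=
  ∀ n₁ n₂ r, IsDefenseOf d n₁ r → IsDefenseOf d n₂ r → n₁ = n₂

/-- (D13) A P-assertion (made at an even position) may be attacked at most
    once. -/
def D13 (d : Dialogue) : Prop :=
  ∀ n₁ n₂ r, r % 2 = 0 → IsAttackOn d n₁ r → IsAttackOn d n₂ r → n₁ = n₂

/-- (E) O can react only upon the immediately preceding P-statement. -/
def ERule (d : Dialogue) : Prop :=
  ∀ n m, n % 2 = 1 → d.moveAt n = some m → m.ref = n - 1

/-- A ruleset is a set of structural rules, i.e. a predicate on dialogues. -/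
def Ruleset := Dialogue → Prop

/-- Ruleset D = {D10, D11, D12, D13}. -/
def rulesetD : Ruleset := fun d => D10 d ∧ D11 d ∧ D12 d ∧ D13 d

/-- Ruleset E = D ∪ {E}. -/
def rulesetE : Ruleset := fun d => rulesetD d ∧ ERule d

/-- Ruleset CL = E − {D11, D12} = {D10, D13, E}. -/
def rulesetCL : Ruleset := fun d => D10 d ∧ D13 d ∧ ERule d

/-- Ruleset N = D − {D11, D12} = {D10, D13}. -/
def rulesetN : Ruleset := fun d => D10 d ∧ D13 d

/-- Ruleset E* = {D10*, D11, D12, D13, E}. -/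
def rulesetEstar : Ruleset :=
  fun d => D10star d ∧ D11 d ∧ D12 d ∧ D13 d ∧ ERule d

/-- Ruleset E′ = {D10′, D11, D12, D13, E}. -/
def rulesetEprime : Ruleset :=
  fun d => D10prime d ∧ D11 d ∧ D12 d ∧ D13 d ∧ ERule d

/-- An S-dialogue: a dialogue adhering to the particle rules and to the
    structural rules S. -/
def Legal (S : Ruleset) (d : Dialogue) : Prop := ParticleOK d ∧ S d

/-- Extend a dialogue by one move. -/
def Dialogue.extend (d : Dialogue) (m : Move) : Dialogue :=
  ⟨d.initial, d.moves ++ [m]⟩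

/-- The position about to be played. -/
def nextPos (d : Dialogue) : ℕ := d.moves.length + 1

/-- It is P's turn (the next position is even). -/
def PTurn (d : Dialogue) : Prop := nextPos d % 2 = 0

/-- The move `m` legally extends the S-dialogue `d`. -/
def LegalExt (S : Ruleset) (d : Dialogue) (m : Move) : Prop :=
  Legal S (d.extend m)

/-- `PWinningC S C d` holds when P, moving under the additional constraint
    `C` on P's own choices, has a winning strategy in the S-dialogue game
    continuing the dialogue `d`: at P's turn, P has a legal move (satisfying
    `C`) after which P is still winning; at O's turn, every legal O-move
    leads to a position where P is winning (in particular, if no O-move is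
    available, P has won: P made the last move and O cannot move). -/
inductive PWinningC (S : Ruleset) (C : Dialogue → Move → Prop) : Dialogue → Prop
  | pMove (d : Dialogue) (m : Move) (hturn : PTurn d)
      (hm : LegalExt S d m) (hC : C d m)
      (h : PWinningC S C (d.extend m)) : PWinningC S C d
  | oMoves (d : Dialogue) (hturn : ¬ PTurn d)
      (h : ∀ m, LegalExt S d m → PWinningC S C (d.extend m)) :
      PWinningC S C d

/-- P has a winning strategy continuing the S-dialogue `d`. -/
def PWinning (S : Ruleset) (d : Dialogue) : Prop :=
  PWinningC S (fun _ _ => True) d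

/-- `valid S φ` (written `⊨_S φ`): the opening assertion of φ is itself a
    legal S-dialogue and P has an S-winning strategy for φ. -/
def valid (S : Ruleset) (φ : Formula) : Prop :=
  Legal S ⟨φ, []⟩ ∧ PWinning S ⟨φ, []⟩

/-- Derivability in intuitionistic propositional logic (a Hilbert-style
    axiomatization with modus ponens). -/
inductive IProv : Formula → Prop
  | k (a b : Formula) : IProv (.imp a (.imp b a))
  | s (a b c : Formula) :
      IProv (.imp (.imp a (.imp b c)) (.imp (.imp a b) (.imp a c)))
  | andE1 (a b : Formula) : IProv (.imp (.and a b) a)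
  | andE2 (a b : Formula) : IProv (.imp (.and a b) b)
  | andI (a b : Formula) : IProv (.imp a (.imp b (.and a b)))
  | orI1 (a b : Formula) : IProv (.imp a (.or a b))
  | orI2 (a b : Formula) : IProv (.imp b (.or a b))
  | orE (a b c : Formula) :
      IProv (.imp (.imp a c) (.imp (.imp b c) (.imp (.or a b) c)))
  | negI (a b : Formula) :
      IProv (.imp (.imp a b) (.imp (.imp a (.neg b)) (.neg a)))
  | negE (a b : Formula) : IProv (.imp (.neg a) (.imp a b))
  | mp (a b : Formula) : IProv (.imp a b) → IProv a → IProv b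

/-- The stability principle ¬¬p → p for the atom `p`. -/
def stab (p : ℕ) : Formula := .imp (.neg (.neg (.atom p))) (.atom p)

/-- Stable logic: intuitionistic propositional logic plus all instances of
    the stability scheme ¬¬p → p for atoms p, closed under modus ponens. -/
inductive StableProv : Formula → Prop
  | intuit (a : Formula) : IProv a → StableProv a
  | stab (p : ℕ) : StableProv (stab p)
  | mp (a b : Formula) : StableProv (.imp a b) → StableProv a → StableProv b

/-- Boolean evaluation of a formula under a valuation of its atoms. -/
def Formula.eval (v : ℕ → Bool) : Formula → Bool
  | .atom p => v p
  | .neg a => !(a.eval v)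
  | .and a b => a.eval v && b.eval v
  | .or a b => a.eval v || b.eval v
  | .imp a b => !(a.eval v) || b.eval v

/-- A classical tautology: true under every Boolean valuation. -/
def Tautology (φ : Formula) : Prop := ∀ v, φ.eval v = true

/-- Uniform substitution of formulas for atoms, applied homomorphically. -/
def Formula.subst (σ : ℕ → Formula) : Formula → Formula
  | .atom p => σ p
  | .neg a => .neg (a.subst σ)
  | .and a b => .and (a.subst σ) (b.subst σ)
  | .or a b => .or (a.subst σ) (b.subst σ)
  | .imp a b => .imp (a.subst σ) (b.subst σ)

/-- The atoms occurring in a formula. -/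
def Formula.atoms : Formula → List ℕ
  | .atom p => [p]
  | .neg a => a.atoms
  | .and a b => a.atoms ++ b.atoms
  | .or a b => a.atoms ++ b.atoms
  | .imp a b => a.atoms ++ b.atoms

/-- Conjunction of a nonempty list of formulas. -/
def conjList (f : Formula) : List Formula → Formula
  | [] => f
  | g :: gs => .and f (conjList g gs)

/-- The conjunction (¬¬p → p) ∧ … of stability instances for the atoms
    `p :: ps`. -/
def stabConj (p : ℕ) (ps : List ℕ) : Formula :=
  conjList (stab p) (ps.map stab)

/-!
Soundness: if `v` falsifies `φ`, O keeps every O-assertion true under `v`, and at O's turn P's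
last move is either a false assertion, which O attacks so that every defense is false, or an
attack on a true O-assertion, which O answers truthfully. By D10 every atom P asserts was asserted
by O and is therefore true, so O always has a reply and P never wins.

Completeness: a position with P to move is described by a sequent `Γ ⇒ Δ`, with `Γ` the
formulas O has asserted and `Δ` those P can assert as defenses. By rule E, O can only react to
P's last move, and without D11 and D12 P may use any earlier defense and attack any O-assertion
again, so P's moves realize the rules of a classical sequent calculus whose rules are invertible.
Proof search on the weight of the sequent then wins every semantically valid sequent: when no
rule applies, the valuation making exactly the atoms of `Γ` true refutes `Γ ⇒ Δ`.
-/

namespace Dialogue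

variable {d : Dialogue} {m mv : Move} {n : ℕ} {s : Statement}

@[simp] lemma extend_moves (d : Dialogue) (m : Move) : (d.extend m).moves = d.moves ++ [m] := rfl

@[simp] lemma extend_initial (d : Dialogue) (m : Move) : (d.extend m).initial = d.initial := rfl

@[simp] lemma nextPos_extend (d : Dialogue) (m : Move) : nextPos (d.extend m) = nextPos d + 1 := by
  simp [nextPos]

lemma stmtAt_eq_some_iff :
    d.stmtAt n = some s ↔
      n = 0 ∧ s = .form d.initial ∨ ∃ mv, d.moveAt n = some mv ∧ mv.statement = s := by
  unfold stmtAt moveAt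
  split_ifs <;> simp [*, eq_comm]

lemma lt_nextPos_of_moveAt_eq_some (h : d.moveAt n = some mv) : 0 < n ∧ n < nextPos d := by
  unfold moveAt at h
  split_ifs at h
  have := (List.getElem?_eq_some_iff.1 h).1
  simp only [nextPos]
  omega

lemma lt_nextPos_of_stmtAt_eq_some (h : d.stmtAt n = some s) : n < nextPos d := by
  rcases stmtAt_eq_some_iff.1 h with ⟨rfl, -⟩ | ⟨mv, hmv, -⟩
  · simp [nextPos]
  · exact (lt_nextPos_of_moveAt_eq_some hmv).2

lemma moveAt_extend_of_lt (d : Dialogue) (m : Move) (h : n < nextPos d) :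
    (d.extend m).moveAt n = d.moveAt n := by
  unfold moveAt nextPos at *
  split_ifs
  · rfl
  · rw [extend_moves, List.getElem?_append_left (by omega)]

lemma stmtAt_extend_of_lt (d : Dialogue) (m : Move) (h : n < nextPos d) :
    (d.extend m).stmtAt n = d.stmtAt n := by
  unfold stmtAt nextPos at *
  split_ifs
  · rfl
  · rw [extend_moves, List.getElem?_append_left (by omega)]

@[simp] lemma moveAt_extend_nextPos (d : Dialogue) (m : Move) :
    (d.extend m).moveAt (nextPos d) = some m := by
  simp [moveAt, nextPos]

@[simp] lemma stmtAt_extend_nextPos (d : Dialogue) (m : Move) :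
    (d.extend m).stmtAt (nextPos d) = some m.statement := by
  simp [stmtAt, nextPos]

lemma moveAt_extend_eq_some :
    (d.extend m).moveAt n = some mv ↔ d.moveAt n = some mv ∨ n = nextPos d ∧ m = mv := by
  rcases lt_trichotomy n (nextPos d) with h | rfl | h
  · have : n ≠ nextPos d := h.ne
    simp [moveAt_extend_of_lt d m h, this]
  · have : d.moveAt (nextPos d) ≠ some mv := fun h' => (lt_nextPos_of_moveAt_eq_some h').2.false
    simp [this]
  · have hnone : ∀ d' : Dialogue, nextPos d' ≤ n → d'.moveAt n ≠ some mv :=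
      fun d' hn h' => (lt_nextPos_of_moveAt_eq_some h').2.not_ge hn
    simp [hnone d h.le, hnone (d.extend m) (by simpa using h), h.ne']

lemma stmtAt_extend_eq_some :
    (d.extend m).stmtAt n = some s ↔
      d.stmtAt n = some s ∨ n = nextPos d ∧ m.statement = s := by
  simp only [stmtAt_eq_some_iff, moveAt_extend_eq_some, extend_initial]
  constructor
  · rintro (h | ⟨mv, hmv | ⟨rfl, rfl⟩, rfl⟩)
    exacts [.inl (.inl h), .inl (.inr ⟨mv, hmv, rfl⟩), .inr ⟨rfl, rfl⟩]
  · rintro ((h | ⟨mv, hmv, rfl⟩) | ⟨rfl, rfl⟩)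
    exacts [.inl h, .inr ⟨mv, .inl hmv, rfl⟩, .inr ⟨m, .inr ⟨rfl, rfl⟩, rfl⟩]

lemma stmtAt_extend_of_eq_some (h : d.stmtAt n = some s) : (d.extend m).stmtAt n = some s :=
  stmtAt_extend_eq_some.2 (.inl h)

lemma moveAt_extend_of_eq_some (h : d.moveAt n = some mv) : (d.extend m).moveAt n = some mv :=
  moveAt_extend_eq_some.2 (.inl h)

end Dialogue

open Dialogue

section Legality

variable {d : Dialogue} {m m' mv : Move} {n : ℕ}

lemma ParticleOK.moveOK (hp : ParticleOK d) (h : d.moveAt n = some mv) : MoveOK d n mv := by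
  have hn := (lt_nextPos_of_moveAt_eq_some h).1
  unfold moveAt at h
  rw [if_neg hn.ne'] at h
  simpa [Nat.sub_add_cancel hn] using hp (n - 1) mv h

lemma MoveOK.extend (h : MoveOK d n m') : MoveOK (d.extend m) n m' := by
  obtain ⟨hlt, hpar, hatk, hdef⟩ := h
  refine ⟨hlt, hpar, fun ha => ?_, fun ha => ?_⟩
  · obtain ⟨ψ, hψ, hs⟩ := hatk ha
    exact ⟨ψ, stmtAt_extend_of_eq_some hψ, hs⟩
  · obtain ⟨a, χ, hma, hia, hχ, hs⟩ := hdef ha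
    exact ⟨a, χ, moveAt_extend_of_eq_some hma, hia, stmtAt_extend_of_eq_some hχ, hs⟩

lemma MoveOK.of_extend (hp : ParticleOK d) (hn : n ≤ nextPos d) (h : MoveOK (d.extend m) n m') :
    MoveOK d n m' := by
  obtain ⟨hlt, hpar, hatk, hdef⟩ := h
  refine ⟨hlt, hpar, fun ha => ?_, fun ha => ?_⟩
  · obtain ⟨ψ, hψ, hs⟩ := hatk ha
    exact ⟨ψ, by rwa [stmtAt_extend_of_lt d m (by omega)] at hψ, hs⟩
  · obtain ⟨a, χ, hma, hia, hχ, hs⟩ := hdef ha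
    rw [moveAt_extend_of_lt d m (by omega)] at hma
    have := (hp.moveOK hma).1
    exact ⟨a, χ, hma, hia, by rwa [stmtAt_extend_of_lt d m (by omega)] at hχ, hs⟩

lemma particleOK_extend_iff (hp : ParticleOK d) :
    ParticleOK (d.extend m) ↔ MoveOK d (nextPos d) m := by
  constructor
  · intro h
    exact (h d.moves.length m (by simp)).of_extend hp le_rfl
  · intro hm i mi hmi
    rcases lt_or_ge i d.moves.length with hi | hi
    · rw [extend_moves, List.getElem?_append_left hi] at hmi
      exact (hp i mi hmi).extend
    · obtain ⟨rfl, rfl⟩ : i = d.moves.length ∧ m = mi := by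
        have := (List.getElem?_eq_some_iff.1 hmi).1
        simp only [extend_moves, List.length_append, List.length_singleton] at this
        obtain rfl : i = d.moves.length := by omega
        simpa using hmi
      exact hm.extend

lemma isAttackOn_extend_iff {r : ℕ} :
    IsAttackOn (d.extend m) n r ↔
      IsAttackOn d n r ∨ n = nextPos d ∧ m.isAttack = true ∧ m.ref = r := by
  simp only [IsAttackOn, moveAt_extend_eq_some]
  constructor
  · rintro ⟨mv, hmv | ⟨rfl, rfl⟩, ha, hr⟩
    exacts [.inl ⟨mv, hmv, ha, hr⟩, .inr ⟨rfl, ha, hr⟩]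
  · rintro (⟨mv, hmv, ha, hr⟩ | ⟨rfl, ha, hr⟩)
    exacts [⟨mv, .inl hmv, ha, hr⟩, ⟨m, .inr ⟨rfl, rfl⟩, ha, hr⟩]

def OAsserted (d : Dialogue) (γ : Formula) : Prop :=
  ∃ j, j % 2 = 1 ∧ d.stmtAt j = some (.form γ)

lemma OAsserted.extend {γ : Formula} (h : OAsserted d γ) : OAsserted (d.extend m) γ :=
  let ⟨j, hj, hs⟩ := h; ⟨j, hj, stmtAt_extend_of_eq_some hs⟩

lemma legal_extend_of_pTurn (hL : Legal rulesetCL d) (hT : PTurn d)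
    (hm : MoveOK d (nextPos d) m)
    (h10 : ∀ q, m.statement = .form (.atom q) → OAsserted d (.atom q)) :
    Legal rulesetCL (d.extend m) := by
  obtain ⟨hp, hD10, hD13, hE⟩ := hL
  have hodd : m.ref % 2 = 1 := by have := hm.2.1; unfold PTurn at hT; omega
  refine ⟨(particleOK_extend_iff hp).2 hm, ?_, ?_, ?_⟩
  · intro n p hn hs
    rcases stmtAt_extend_eq_some.1 hs with hs | ⟨rfl, hst⟩
    · obtain ⟨j, hj, hjo, hjs⟩ := hD10 n p hn hs
      exact ⟨j, hj, hjo, stmtAt_extend_of_eq_some hjs⟩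
    · obtain ⟨j, hjo, hjs⟩ := h10 p hst
      exact ⟨j, lt_nextPos_of_stmtAt_eq_some hjs, hjo, stmtAt_extend_of_eq_some hjs⟩
  · intro n₁ n₂ r hr h₁ h₂
    rcases isAttackOn_extend_iff.1 h₁ with h₁ | ⟨-, -, rfl⟩
    · rcases isAttackOn_extend_iff.1 h₂ with h₂ | ⟨-, -, rfl⟩
      exacts [hD13 n₁ n₂ r hr h₁ h₂, absurd hr (by omega)]
    · exact absurd hr (by omega)
  · intro n mv hn hmv
    rcases moveAt_extend_eq_some.1 hmv with hmv | ⟨rfl, -⟩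
    · exact hE n mv hn hmv
    · unfold PTurn at hT; omega

lemma legal_extend_of_not_pTurn (hL : Legal rulesetCL d) (hT : ¬ PTurn d)
    (hm : MoveOK d (nextPos d) m) (href : m.ref = d.moves.length) :
    Legal rulesetCL (d.extend m) := by
  obtain ⟨hp, hD10, hD13, hE⟩ := hL
  have hodd : nextPos d % 2 = 1 := by unfold PTurn at hT; omega
  have hfresh : ∀ n, ¬ IsAttackOn d n d.moves.length := by
    rintro n ⟨mv, hmv, -, hr⟩
    have := (hp.moveOK hmv).1
    have := (lt_nextPos_of_moveAt_eq_some hmv).2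
    simp only [nextPos] at *
    omega
  refine ⟨(particleOK_extend_iff hp).2 hm, ?_, ?_, ?_⟩
  · intro n p hn hs
    rcases stmtAt_extend_eq_some.1 hs with hs | ⟨rfl, -⟩
    · obtain ⟨j, hj, hjo, hjs⟩ := hD10 n p hn hs
      exact ⟨j, hj, hjo, stmtAt_extend_of_eq_some hjs⟩
    · omega
  · intro n₁ n₂ r hr h₁ h₂
    rcases isAttackOn_extend_iff.1 h₁ with h₁ | ⟨rfl, -, rfl⟩ <;>
      rcases isAttackOn_extend_iff.1 h₂ with h₂ | ⟨rfl, -, h⟩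
    · exact hD13 n₁ n₂ r hr h₁ h₂
    · subst h; rw [href] at h₁; exact (hfresh n₁ h₁).elim
    · rw [href] at h₂; exact (hfresh n₂ h₂).elim
    · rfl
  · intro n mv hn hmv
    rcases moveAt_extend_eq_some.1 hmv with hmv | ⟨rfl, rfl⟩
    · exact hE n mv hn hmv
    · simp [href, nextPos]

lemma LegalExt.ref_eq (hT : ¬ PTurn d) (h : LegalExt rulesetCL d m) :
    m.ref = d.moves.length := by
  have := h.2.2.2 (nextPos d) m (by unfold PTurn at hT; omega) (moveAt_extend_nextPos d m)
  simpa [nextPos] using this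

lemma LegalExt.moveOK {S : Ruleset} (hL : Legal S d) (h : LegalExt S d m) :
    MoveOK d (nextPos d) m :=
  (particleOK_extend_iff hL.1).1 h.1

lemma legal_mk_nil {φ : Formula} (hφ : ∀ q, φ ≠ .atom q) : Legal rulesetCL ⟨φ, []⟩ := by
  have hmove : ∀ n mv, (⟨φ, []⟩ : Dialogue).moveAt n ≠ some mv := fun n mv h => by
    have := lt_nextPos_of_moveAt_eq_some h
    simp [nextPos] at this
    omega
  refine ⟨fun i m h => by simp at h, fun n p hn hs => ?_,
    fun _ _ _ _ ⟨mv, h, _⟩ => absurd h (hmove _ mv),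
    fun n mv _ h => absurd h (hmove n mv)⟩
  have := lt_nextPos_of_stmtAt_eq_some hs
  obtain rfl : n = 0 := by simpa [nextPos] using this
  exact absurd (by simpa [stmtAt] using hs) (hφ p)

end Legality

section Soundness

variable {v : ℕ → Bool} {d : Dialogue} {m : Move}

lemma exists_attack_of_eval_false {ψ : Formula} (hψ : ψ.eval v = false)
    (hatom : ∀ q, ψ ≠ .atom q) :
    ∃ s, Attacks s ψ ∧ (∀ a, s = .form a → a.eval v = true) ∧
      ∀ a, Defends ψ s (.form a) → a.eval v = false := by
  cases ψ with
  | atom q => exact absurd rfl (hatom q)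
  | neg a =>
    refine ⟨.form a, .neg a, ?_, fun _ h => nomatch h⟩
    rintro _ ⟨⟩
    simpa [Formula.eval] using hψ
  | and a b =>
    simp only [Formula.eval, Bool.and_eq_false_iff] at hψ
    rcases hψ with ha | hb
    · exact ⟨.andL, .andL a b, (fun _ h => nomatch h), by rintro _ ⟨⟩; exact ha⟩
    · exact ⟨.andR, .andR a b, (fun _ h => nomatch h), by rintro _ ⟨⟩; exact hb⟩
  | or a b =>
    simp only [Formula.eval, Bool.or_eq_false_iff] at hψ
    exact ⟨.qmark, .qmark a b, (fun _ h => nomatch h), by rintro _ (_ | _) <;> simp [hψ]⟩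
  | imp a b =>
    simp only [Formula.eval, Bool.or_eq_false_iff, Bool.not_eq_false'] at hψ
    refine ⟨.form a, .imp a b, ?_, by rintro _ ⟨⟩; exact hψ.2⟩
    rintro _ ⟨⟩
    exact hψ.1

lemma exists_defense_of_eval_true {s : Statement} {χ : Formula} (hs : Attacks s χ)
    (hχ : χ.eval v = true) :
    (∃ a, s = .form a ∧ a.eval v = false) ∨
      ∃ ψ, Defends χ s (.form ψ) ∧ ψ.eval v = true := by
  cases hs with
  | andL a b => exact .inr ⟨a, .andL a b, by simp_all [Formula.eval]⟩
  | andR a b => exact .inr ⟨b, .andR a b, by simp_all [Formula.eval]⟩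
  | qmark a b =>
    simp only [Formula.eval, Bool.or_eq_true] at hχ
    rcases hχ with ha | hb
    exacts [.inr ⟨a, .orL a b, ha⟩, .inr ⟨b, .orR a b, hb⟩]
  | imp a b =>
    cases ha : a.eval v
    · exact .inl ⟨a, rfl, ha⟩
    · exact .inr ⟨b, .imp a b, by simp_all [Formula.eval]⟩
  | neg a => exact .inl ⟨a, rfl, by simpa [Formula.eval] using hχ⟩

lemma Defends.exists_eq_form {χ : Formula} {s t : Statement} (h : Defends χ s t) :
    ∃ ψ, t = .form ψ := by
  cases h <;> exact ⟨_, rfl⟩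

/-- The invariant of O's counter-strategy against a valuation `v` of the atoms. -/
structure Refutes (v : ℕ → Bool) (d : Dialogue) : Prop where
  legal : Legal rulesetCL d
  oAssertion_true : ∀ j ψ, j % 2 = 1 → d.stmtAt j = some (.form ψ) → ψ.eval v = true
  defense_false : ∀ j mv χ ψ, j % 2 = 1 → d.moveAt j = some mv → mv.isAttack = true →
    d.stmtAt mv.ref = some (.form χ) → Defends χ mv.statement (.form ψ) → ψ.eval v = false
  last_pMove : ¬ PTurn d →
    (∃ ψ, d.stmtAt d.moves.length = some (.form ψ) ∧ ψ.eval v = false) ∨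
    ∃ mv χ ψ, d.moveAt d.moves.length = some mv ∧ mv.isAttack = true ∧
      d.stmtAt mv.ref = some (.form χ) ∧ Defends χ mv.statement (.form ψ) ∧ ψ.eval v = true

lemma Refutes.extend_of_pTurn (h : Refutes v d) (hT : PTurn d) (hm : LegalExt rulesetCL d m) :
    Refutes v (d.extend m) := by
  have hmOK := hm.moveOK h.legal
  have hT' : nextPos d % 2 = 0 := hT
  have hodd : m.ref % 2 = 1 := by have := hmOK.2.1; omega
  refine ⟨hm, fun j ψ hj hs => ?_, fun j mv χ ψ hj hmv ha hχ hd => ?_, fun _ => ?_⟩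
  · rcases stmtAt_extend_eq_some.1 hs with hs | ⟨rfl, -⟩
    · exact h.oAssertion_true j ψ hj hs
    · omega
  · rcases moveAt_extend_eq_some.1 hmv with hmv | ⟨rfl, -⟩
    · have := (h.legal.1.moveOK hmv).1
      have := (lt_nextPos_of_moveAt_eq_some hmv).2
      rw [stmtAt_extend_of_lt d m (by omega)] at hχ
      exact h.defense_false j mv χ ψ hj hmv ha hχ hd
    · omega
  have hlen : (d.extend m).moves.length = nextPos d := by simp [nextPos]
  rw [hlen, stmtAt_extend_nextPos, moveAt_extend_nextPos]
  cases hb : m.isAttack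
  · obtain ⟨a, χ, hma, hia, hχ, hd⟩ := hmOK.2.2.2 hb
    obtain ⟨ψ, hψ⟩ := hd.exists_eq_form
    rw [hψ] at hd ⊢
    exact .inl ⟨ψ, rfl, h.defense_false m.ref a χ ψ hodd hma hia hχ hd⟩
  · obtain ⟨χ, hχ, hs⟩ := hmOK.2.2.1 hb
    rcases exists_defense_of_eval_true hs (h.oAssertion_true _ _ hodd hχ) with
      ⟨a, ha, hf⟩ | ⟨ψ, hd, ht⟩
    · exact .inl ⟨a, by rw [ha], hf⟩
    · exact .inr ⟨m, χ, ψ, rfl, hb, stmtAt_extend_of_eq_some hχ, hd, ht⟩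

lemma Refutes.extend_of_not_pTurn (h : Refutes v d) (hT : ¬ PTurn d)
    (hm : MoveOK d (nextPos d) m) (href : m.ref = d.moves.length)
    (htrue : ∀ ψ, m.statement = .form ψ → ψ.eval v = true)
    (hfalse : m.isAttack = true → ∀ χ ψ, d.stmtAt m.ref = some (.form χ) →
      Defends χ m.statement (.form ψ) → ψ.eval v = false) :
    Refutes v (d.extend m) := by
  refine ⟨legal_extend_of_not_pTurn h.legal hT hm href, fun j ψ hj hs => ?_,
    fun j mv χ ψ hj hmv ha hχ hd => ?_, fun hT' => absurd ?_ hT'⟩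
  · rcases stmtAt_extend_eq_some.1 hs with hs | ⟨rfl, hst⟩
    exacts [h.oAssertion_true j ψ hj hs, htrue ψ hst]
  · rcases moveAt_extend_eq_some.1 hmv with hmv | ⟨rfl, rfl⟩
    · have := (h.legal.1.moveOK hmv).1
      have := (lt_nextPos_of_moveAt_eq_some hmv).2
      rw [stmtAt_extend_of_lt d _ (by omega)] at hχ
      exact h.defense_false j mv χ ψ hj hmv ha hχ hd
    · rw [stmtAt_extend_of_lt d _ (by simp [href, nextPos])] at hχ
      exact hfalse ha χ ψ hχ hd
  · unfold PTurn at hT ⊢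
    simp only [nextPos_extend]
    omega

lemma Refutes.exists_extend (h : Refutes v d) (hT : ¬ PTurn d) :
    ∃ m, LegalExt rulesetCL d m ∧ Refutes v (d.extend m) := by
  suffices ∃ m : Move, MoveOK d (nextPos d) m ∧ m.ref = d.moves.length ∧
      (∀ ψ, m.statement = .form ψ → ψ.eval v = true) ∧
      (m.isAttack = true → ∀ χ ψ, d.stmtAt m.ref = some (.form χ) →
        Defends χ m.statement (.form ψ) → ψ.eval v = false) by
    obtain ⟨m, hm, href, htrue, hfalse⟩ := this
    have hR := h.extend_of_not_pTurn hT hm href htrue hfalse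
    exact ⟨m, hR.legal, hR⟩
  have heven : d.moves.length % 2 = 0 := by unfold PTurn nextPos at hT; omega
  rcases h.last_pMove hT with ⟨ψ, hψ, hf⟩ | ⟨mv, χ, ψ, hmv, ha, hχ, hd, ht⟩
  · -- D10: O asserted this atom before, so it is true
    have hatom : ∀ q, ψ ≠ .atom q := by
      rintro q rfl
      obtain ⟨j, -, hj, hjs⟩ := h.legal.2.1 _ q heven hψ
      have := h.oAssertion_true j _ hj hjs
      simp only [Formula.eval] at this hf
      simp [this] at hf
    obtain ⟨s, hs, htrue, hfalse⟩ := exists_attack_of_eval_false hf hatom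
    refine ⟨⟨s, true, d.moves.length⟩,
      ⟨by simp [nextPos], by simp [nextPos]; omega, fun _ => ⟨ψ, hψ, hs⟩,
        fun h => nomatch h⟩,
      rfl, htrue, fun _ χ' ψ' hχ' hd => ?_⟩
    obtain rfl := Statement.form.inj (Option.some.inj (hχ'.symm.trans hψ))
    exact hfalse ψ' hd
  · refine ⟨⟨.form ψ, false, d.moves.length⟩,
      ⟨by simp [nextPos], by simp [nextPos]; omega, (fun h => nomatch h),
        fun _ => ⟨mv, χ, hmv, ha, hχ, hd⟩⟩, rfl, ?_, fun h => nomatch h⟩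
    rintro _ ⟨⟩
    exact ht

lemma Refutes.not_pWinning (h : Refutes v d) : ¬ PWinning rulesetCL d := by
  intro hw
  induction hw with
  | pMove d m hT hm _ _ ih => exact ih (h.extend_of_pTurn hT hm)
  | oMoves d hT _ ih =>
    obtain ⟨m, hm, hR⟩ := h.exists_extend hT
    exact ih m hm hR

theorem tautology_of_valid {φ : Formula} (h : valid rulesetCL φ) : Tautology φ := by
  intro v
  by_contra hv
  refine Refutes.not_pWinning (v := v) ⟨h.1, fun j ψ hj hs => ?_, fun j mv χ ψ hj hmv => ?_,
    fun _ => .inl ⟨φ, rfl, by simpa using hv⟩⟩ h.2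
  · have := lt_nextPos_of_stmtAt_eq_some hs
    simp [nextPos] at this
    omega
  · have := lt_nextPos_of_moveAt_eq_some hmv
    simp [nextPos] at this
    omega

end Soundness

section Completeness

variable {d : Dialogue} {m : Move} {Γ Δ Γ' Δ' Γ₁ Δ₁ : Multiset Formula} {a b χ : Formula}

def CanDefendWith (d : Dialogue) (a : Formula) : Prop :=
  ∃ r mv χ, r % 2 = 1 ∧ d.moveAt r = some mv ∧ mv.isAttack = true ∧
    d.stmtAt mv.ref = some (.form χ) ∧ Defends χ mv.statement (.form a)

lemma CanDefendWith.extend (h : CanDefendWith d a) : CanDefendWith (d.extend m) a :=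
  let ⟨r, mv, χ, hr, hmv, hia, hχ, hd⟩ := h
  ⟨r, mv, χ, hr, moveAt_extend_of_eq_some hmv, hia, stmtAt_extend_of_eq_some hχ, hd⟩

structure Realizes (d : Dialogue) (Γ Δ : Multiset Formula) : Prop where
  legal : Legal rulesetCL d
  pTurn : PTurn d
  conceded : ∀ γ ∈ Γ, OAsserted d γ
  defensible : ∀ a ∈ Δ, CanDefendWith d a

def Winning (Γ Δ : Multiset Formula) : Prop :=
  ∀ d, Realizes d Γ Δ → PWinning rulesetCL d

lemma Winning.mono (h : Winning Γ Δ) (hΓ : Γ ≤ Γ') (hΔ : Δ ≤ Δ') : Winning Γ' Δ' :=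
  fun d hG => h d ⟨hG.legal, hG.pTurn,
    fun γ hγ => hG.conceded γ (Multiset.subset_of_le hΓ hγ),
    fun a ha => hG.defensible a (Multiset.subset_of_le hΔ ha)⟩

/-- The formulas that O concedes (`Γ₁`) and those P may defend with (`Δ₁`) when O attacks a
P-assertion of the given formula. -/
inductive AttackOutcome : Formula → Multiset Formula → Multiset Formula → Prop
  | neg (a : Formula) : AttackOutcome (.neg a) {a} 0
  | andL (a b : Formula) : AttackOutcome (.and a b) 0 {a}
  | andR (a b : Formula) : AttackOutcome (.and a b) 0 {b}
  | or (a b : Formula) : AttackOutcome (.or a b) 0 {a, b}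
  | imp (a b : Formula) : AttackOutcome (.imp a b) {a} {b}

lemma Attacks.exists_attackOutcome {s : Statement} (h : Attacks s a) :
    ∃ Γ₁ Δ₁, AttackOutcome a Γ₁ Δ₁ ∧ (∀ γ ∈ Γ₁, s = .form γ) ∧
      ∀ b ∈ Δ₁, Defends a s (.form b) := by
  cases h with
  | andL a b => exact ⟨_, _, .andL a b, by simp, by simpa using .andL a b⟩
  | andR a b => exact ⟨_, _, .andR a b, by simp, by simpa using .andR a b⟩
  | qmark a b => exact ⟨_, _, .or a b, by simp, by simpa using ⟨.orL a b, .orR a b⟩⟩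
  | imp a b => exact ⟨_, _, .imp a b, by simp, by simpa using .imp a b⟩
  | neg a => exact ⟨_, _, .neg a, by simp, by simp⟩

lemma realizes_extend_of_not_pTurn (hT : ¬ PTurn d) (hm : LegalExt rulesetCL d m)
    (hΓ : ∀ γ ∈ Γ, OAsserted d γ ∨ m.statement = .form γ)
    (hΔ : ∀ a ∈ Δ, CanDefendWith d a ∨
      m.isAttack = true ∧
        ∃ χ, d.stmtAt m.ref = some (.form χ) ∧ Defends χ m.statement (.form a)) :
    Realizes (d.extend m) Γ Δ := by
  have hodd : nextPos d % 2 = 1 := by unfold PTurn at hT; omega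
  refine ⟨hm, by unfold PTurn; simp only [nextPos_extend]; omega,
    fun γ hγ => ?_, fun a ha => ?_⟩
  · rcases hΓ γ hγ with h | h
    · exact h.extend
    · exact ⟨nextPos d, hodd, by rw [stmtAt_extend_nextPos, h]⟩
  · rcases hΔ a ha with h | ⟨hia, χ, hχ, hd⟩
    · exact h.extend
    · exact ⟨nextPos d, m, χ, hodd, moveAt_extend_nextPos d m, hia,
        stmtAt_extend_of_eq_some hχ, hd⟩

/-- By rule E, O can only attack P's last assertion or defend against P's last attack. -/
lemma pWinning_of_not_pTurn (hL : Legal rulesetCL d) (hT : ¬ PTurn d)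
    (hΓ : ∀ γ ∈ Γ, OAsserted d γ) (hΔ : ∀ a ∈ Δ, CanDefendWith d a)
    (hattacked : ∀ a Γ₁ Δ₁, d.stmtAt d.moves.length = some (.form a) →
      AttackOutcome a Γ₁ Δ₁ → Winning (Γ₁ + Γ) (Δ₁ + Δ))
    (hdefended : ∀ mv χ ψ, d.moveAt d.moves.length = some mv → mv.isAttack = true →
      d.stmtAt mv.ref = some (.form χ) → Defends χ mv.statement (.form ψ) →
      Winning (ψ ::ₘ Γ) Δ) :
    PWinning rulesetCL d := by
  refine .oMoves d hT fun m hm => ?_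
  have href := hm.ref_eq hT
  have hmOK := hm.moveOK hL
  cases hb : m.isAttack
  · obtain ⟨mv, χ, hmv, hia, hχ, hd⟩ := hmOK.2.2.2 hb
    obtain ⟨ψ, hψ⟩ := hd.exists_eq_form
    rw [href] at hmv
    rw [hψ] at hd
    refine hdefended mv χ ψ hmv hia hχ hd _ (realizes_extend_of_not_pTurn hT hm ?_ ?_)
    · simp only [Multiset.mem_cons]
      rintro γ (rfl | hγ)
      exacts [.inr hψ, .inl (hΓ γ hγ)]
    · exact fun a ha => .inl (hΔ a ha)
  · obtain ⟨χ, hχ, hs⟩ := hmOK.2.2.1 hb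
    obtain ⟨Γ₁, Δ₁, ho, hΓ₁, hΔ₁⟩ := hs.exists_attackOutcome
    refine hattacked χ Γ₁ Δ₁ (href ▸ hχ) ho _ (realizes_extend_of_not_pTurn hT hm ?_ ?_)
    · simp only [Multiset.mem_add]
      rintro γ (hγ | hγ)
      exacts [.inr (hΓ₁ γ hγ), .inl (hΓ γ hγ)]
    · simp only [Multiset.mem_add]
      rintro a (ha | ha)
      exacts [.inr ⟨hb, χ, hχ, hΔ₁ a ha⟩, .inl (hΔ a ha)]

/-- Rule D10, read on the formulas `Γ` conceded by O. -/
def MayAssert (Γ : Multiset Formula) (a : Formula) : Prop :=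
  ∀ q, a = .atom q → .atom q ∈ Γ

lemma Realizes.pWinning_of_move (hG : Realizes d Γ Δ) (hm : MoveOK d (nextPos d) m)
    (hmay : ∀ a, m.statement = .form a → MayAssert Γ a)
    (hattacked : ∀ a Γ₁ Δ₁, m.statement = .form a → AttackOutcome a Γ₁ Δ₁ →
      Winning (Γ₁ + Γ) (Δ₁ + Δ))
    (hdefended : ∀ χ ψ, m.isAttack = true → d.stmtAt m.ref = some (.form χ) →
      Defends χ m.statement (.form ψ) → Winning (ψ ::ₘ Γ) Δ) :
    PWinning rulesetCL d := by
  have hL := legal_extend_of_pTurn hG.legal hG.pTurn hm fun q hq => hG.conceded _ (hmay _ hq q rfl)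
  have hlen : (d.extend m).moves.length = nextPos d := by simp [nextPos]
  refine .pMove d m hG.pTurn hL trivial (pWinning_of_not_pTurn hL ?_
    (fun γ hγ => (hG.conceded γ hγ).extend) (fun a ha => (hG.defensible a ha).extend) ?_ ?_)
  · have := hG.pTurn
    unfold PTurn at this ⊢
    simp only [nextPos_extend]
    omega
  · intro a Γ₁ Δ₁ ha
    rw [hlen, stmtAt_extend_nextPos, Option.some.injEq] at ha
    exact hattacked a Γ₁ Δ₁ ha
  · intro mv χ ψ hmv hia hχ hd
    rw [hlen, moveAt_extend_nextPos, Option.some.injEq] at hmv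
    subst hmv
    rw [stmtAt_extend_of_lt d _ hm.1] at hχ
    exact hdefended χ ψ hia hχ hd

theorem winning_right (hmay : MayAssert Γ a)
    (h : ∀ Γ₁ Δ₁, AttackOutcome a Γ₁ Δ₁ → Winning (Γ₁ + Γ) (Δ₁ + Δ)) :
    Winning Γ (a ::ₘ Δ) := by
  intro d hG
  obtain ⟨r, mv, χ, hr, hmv, hia, hχ, hd⟩ := hG.defensible a (Multiset.mem_cons_self a Δ)
  have hT : nextPos d % 2 = 0 := hG.pTurn
  refine hG.pWinning_of_move (m := ⟨.form a, false, r⟩)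
    ⟨(lt_nextPos_of_moveAt_eq_some hmv).2, by simp only; omega, (fun h => nomatch h),
      fun _ => ⟨mv, χ, hmv, hia, hχ, hd⟩⟩
    (fun _ hb => Statement.form.inj hb ▸ hmay) (fun b Γ₁ Δ₁ hb ho => ?_)
    (fun _ _ h => nomatch h)
  obtain rfl := Statement.form.inj hb
  exact (h Γ₁ Δ₁ ho).mono le_rfl (by simp [Multiset.le_cons_self])

theorem winning_of_attack {s : Statement} (hχ : χ ∈ Γ) (hs : Attacks s χ)
    (hmay : ∀ a, s = .form a → MayAssert Γ a)
    (hattacked : ∀ a Γ₁ Δ₁, s = .form a → AttackOutcome a Γ₁ Δ₁ →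
      Winning (Γ₁ + Γ) (Δ₁ + Δ))
    (hdefended : ∀ ψ, Defends χ s (.form ψ) → Winning (ψ ::ₘ Γ) Δ) :
    Winning Γ Δ := by
  intro d hG
  obtain ⟨j, hj, hjs⟩ := hG.conceded χ hχ
  have hT : nextPos d % 2 = 0 := hG.pTurn
  refine hG.pWinning_of_move (m := ⟨s, true, j⟩)
    ⟨lt_nextPos_of_stmtAt_eq_some hjs, by simp only; omega, fun _ => ⟨χ, hjs, hs⟩,
      (fun h => nomatch h)⟩
    hmay hattacked (fun χ' ψ _ hχ' hd => ?_)
  obtain rfl := Statement.form.inj (Option.some.inj (hχ'.symm.trans hjs))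
  exact hdefended ψ hd

theorem winning_neg_left (hmay : MayAssert (.neg a ::ₘ Γ) a)
    (h : ∀ Γ₁ Δ₁, AttackOutcome a Γ₁ Δ₁ → Winning (Γ₁ + Γ) (Δ₁ + Δ)) :
    Winning (.neg a ::ₘ Γ) Δ := by
  refine winning_of_attack (Multiset.mem_cons_self _ _) (.neg a)
    (fun _ ha => Statement.form.inj ha ▸ hmay) (fun _ Γ₁ Δ₁ ha ho => ?_)
    (fun _ h => nomatch h)
  cases ha
  exact (h Γ₁ Δ₁ ho).mono (by simp [Multiset.le_cons_self]) le_rfl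

theorem winning_imp_left (hmay : MayAssert (.imp a b ::ₘ Γ) a)
    (h : ∀ Γ₁ Δ₁, AttackOutcome a Γ₁ Δ₁ → Winning (Γ₁ + Γ) (Δ₁ + Δ))
    (hb : Winning (b ::ₘ Γ) Δ) :
    Winning (.imp a b ::ₘ Γ) Δ := by
  refine winning_of_attack (Multiset.mem_cons_self _ _) (.imp a b)
    (fun _ ha => Statement.form.inj ha ▸ hmay) (fun _ Γ₁ Δ₁ ha ho => ?_) (fun _ hd => ?_)
  · cases ha
    exact (h Γ₁ Δ₁ ho).mono (by simp [Multiset.le_cons_self]) le_rfl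
  · cases hd
    exact hb.mono (by simp [Multiset.le_cons_self]) le_rfl

theorem winning_or_left (ha : Winning (a ::ₘ Γ) Δ) (hb : Winning (b ::ₘ Γ) Δ) :
    Winning (.or a b ::ₘ Γ) Δ := by
  refine winning_of_attack (Multiset.mem_cons_self _ _) (.qmark a b) (fun _ h => nomatch h)
    (fun _ _ _ h => nomatch h) (fun _ hd => ?_)
  cases hd
  exacts [ha.mono (by simp [Multiset.le_cons_self]) le_rfl,
    hb.mono (by simp [Multiset.le_cons_self]) le_rfl]

/-- D13 restricts only attacks on P-assertions, so P attacks the conjunction twice. -/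
theorem winning_and_left (h : Winning (a ::ₘ b ::ₘ Γ) Δ) : Winning (.and a b ::ₘ Γ) Δ :=
  winning_of_attack (Multiset.mem_cons_self _ _) (.andL a b) (fun _ h => nomatch h)
    (fun _ _ _ h => nomatch h) fun _ hd => by
      cases hd
      exact winning_of_attack (by simp) (.andR a b) (fun _ h => nomatch h)
        (fun _ _ _ h => nomatch h) fun _ hd => by
          cases hd
          rw [Multiset.cons_swap b a]
          exact h.mono (by simp [Multiset.le_cons_self]) le_rfl

end Completeness

section ProofSearch

variable {Γ Δ Γ₁ Δ₁ : Multiset Formula} {a b : Formula}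

def Holds (Γ Δ : Multiset Formula) : Prop :=
  ∀ v, (∀ γ ∈ Γ, γ.eval v = true) → ∃ δ ∈ Δ, δ.eval v = true

lemma Holds.attackOutcome (h : Holds Γ (a ::ₘ Δ)) (ho : AttackOutcome a Γ₁ Δ₁) :
    Holds (Γ₁ + Γ) (Δ₁ + Δ) := by
  intro v hv
  simp only [Multiset.mem_add] at hv ⊢
  obtain ⟨δ, hδ, ht⟩ := h v fun γ hγ => hv γ (.inr hγ)
  rcases Multiset.mem_cons.1 hδ with rfl | hδ
  · cases ho <;> simp_all [Formula.eval]
    rcases ht with ha | hb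
    exacts [⟨_, .inl (.inl rfl), ha⟩, ⟨_, .inl (.inr rfl), hb⟩]
  · exact ⟨δ, .inr hδ, ht⟩

lemma Holds.neg_left (h : Holds (.neg a ::ₘ Γ) Δ) : Holds Γ (a ::ₘ Δ) := by
  intro v hv
  cases ha : a.eval v
  · obtain ⟨δ, hδ, ht⟩ := h v (by simp_all [Formula.eval])
    exact ⟨δ, Multiset.mem_cons_of_mem hδ, ht⟩
  · exact ⟨a, Multiset.mem_cons_self a Δ, ha⟩

lemma Holds.imp_left (h : Holds (.imp a b ::ₘ Γ) Δ) :
    Holds Γ (a ::ₘ Δ) ∧ Holds (b ::ₘ Γ) Δ :=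
  ⟨Holds.neg_left fun v hv => h v (by simp_all [Formula.eval]),
    fun v hv => h v (by simp_all [Formula.eval])⟩

lemma Holds.or_left (h : Holds (.or a b ::ₘ Γ) Δ) :
    Holds (a ::ₘ Γ) Δ ∧ Holds (b ::ₘ Γ) Δ :=
  ⟨fun v hv => h v (by simp_all [Formula.eval]), fun v hv => h v (by simp_all [Formula.eval])⟩

lemma Holds.and_left (h : Holds (.and a b ::ₘ Γ) Δ) : Holds (a ::ₘ b ::ₘ Γ) Δ :=
  fun v hv => h v (by simp_all [Formula.eval])

def Attackable (Γ : Multiset Formula) : Formula → Prop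
  | .atom _ => False
  | .neg a => MayAssert Γ a
  | .and _ _ => True
  | .or _ _ => True
  | .imp a _ => MayAssert Γ a

/-- If P has no move, the valuation making exactly the atoms of `Γ` true refutes `Γ ⇒ Δ`. -/
lemma Holds.exists_principal (h : Holds Γ Δ) :
    (∃ a ∈ Δ, MayAssert Γ a) ∨ ∃ χ ∈ Γ, Attackable Γ χ := by
  by_contra! hstuck
  obtain ⟨hΔ, hΓ⟩ := hstuck
  have hatom : ∀ a, ¬ MayAssert Γ a → ∃ q, a = .atom q ∧ .atom q ∉ Γ := by
    simp [MayAssert]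
  set v : ℕ → Bool := fun q => decide (.atom q ∈ Γ)
  have hΓtrue : ∀ γ ∈ Γ, γ.eval v = true := by
    intro γ hγ
    have hγ' := hΓ γ hγ
    cases γ with
    | atom q => simpa [Formula.eval, v] using hγ
    | neg a | imp a _ =>
      obtain ⟨q, rfl, hq⟩ := hatom a hγ'
      simp [Formula.eval, v, hq]
    | and | or => exact absurd trivial hγ'
  obtain ⟨δ, hδ, ht⟩ := h v hΓtrue
  obtain ⟨q, rfl, hq⟩ := hatom δ (hΔ δ hδ)
  simp [Formula.eval, v, hq] at ht

def Formula.size : Formula → ℕ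
  | .atom _ => 1
  | .neg a => a.size + 1
  | .and a b | .or a b | .imp a b => a.size + b.size + 1

def weight (Γ : Multiset Formula) : ℕ := (Γ.map Formula.size).sum

@[simp] lemma weight_zero : weight 0 = 0 := rfl

@[simp] lemma weight_singleton : weight {a} = a.size := by simp [weight]

@[simp] lemma weight_cons : weight (a ::ₘ Γ) = a.size + weight Γ := by simp [weight]

@[simp] lemma weight_add : weight (Γ + Δ) = weight Γ + weight Δ := by simp [weight]

lemma AttackOutcome.weight_lt (h : AttackOutcome a Γ₁ Δ₁) :
    weight Γ₁ + weight Δ₁ < a.size := by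
  cases h <;> simp [Formula.size]

theorem Holds.winning (h : Holds Γ Δ) : Winning Γ Δ := by
  induction hn : weight Γ + weight Δ using Nat.strong_induction_on generalizing Γ Δ with
  | _ n ih =>
  subst hn
  have smaller : ∀ {Γ' Δ'}, weight Γ' + weight Δ' < weight Γ + weight Δ →
      Holds Γ' Δ' → Winning Γ' Δ' :=
    fun hlt h' => ih _ hlt h' rfl
  have assert : ∀ {Γ' Δ' a}, weight Γ' + a.size + weight Δ' ≤ weight Γ + weight Δ →
      Holds Γ' (a ::ₘ Δ') →
      ∀ Γ₁ Δ₁, AttackOutcome a Γ₁ Δ₁ → Winning (Γ₁ + Γ') (Δ₁ + Δ') :=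
    fun hw h' Γ₁ Δ₁ ho =>
      smaller (by have := ho.weight_lt; simp only [weight_add]; omega) (h'.attackOutcome ho)
  rcases h.exists_principal with ⟨a, ha, hmay⟩ | ⟨χ, hχ, hatt⟩
  · obtain ⟨Δ', rfl⟩ := Multiset.exists_cons_of_mem ha
    exact winning_right hmay (assert (by simp only [weight_cons]; omega) h)
  obtain ⟨Γ', rfl⟩ := Multiset.exists_cons_of_mem hχ
  cases χ with
  | atom => exact hatt.elim
  | neg a =>
    exact winning_neg_left hatt
      (assert (by simp only [weight_cons, Formula.size]; omega) h.neg_left)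
  | imp a b =>
    exact winning_imp_left hatt
      (assert (by simp only [weight_cons, Formula.size]; omega) h.imp_left.1)
      (smaller (by simp only [weight_cons, Formula.size]; omega) h.imp_left.2)
  | or a b =>
    exact winning_or_left (smaller (by simp only [weight_cons, Formula.size]; omega) h.or_left.1)
      (smaller (by simp only [weight_cons, Formula.size]; omega) h.or_left.2)
  | and a b =>
    exact winning_and_left (smaller (by simp only [weight_cons, Formula.size]; omega) h.and_left)

end ProofSearch

theorem valid_of_tautology {φ : Formula} (h : Tautology φ) : valid rulesetCL φ := by
  have hφ : ∀ q, φ ≠ .atom q := by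
    rintro q rfl
    simpa [Formula.eval] using h fun _ => false
  have hL := legal_mk_nil hφ
  have hholds : Holds 0 (φ ::ₘ 0) := fun v _ => ⟨φ, Multiset.mem_cons_self φ 0, h v⟩
  refine ⟨hL, pWinning_of_not_pTurn (Γ := 0) (Δ := 0) hL (by simp [PTurn, nextPos])
    (by simp) (by simp) (fun a Γ₁ Δ₁ ha ho => ?_)
    (fun mv _ _ hmv => by simp [moveAt] at hmv)⟩
  obtain rfl : a = φ := by simpa [stmtAt] using ha.symm
  exact (hholds.attackOutcome ho).winning

/-- (Felscher) φ is a classical tautology iff φ is CL-valid. -/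
theorem classical_tautology_iff_CL_valid (φ : Formula) :
    Tautology φ ↔ valid rulesetCL φ :=
  ⟨valid_of_tautology, tautology_of_valid⟩

end LorenzenDialogues
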